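/- Let N ≥ 2, 1 < p < ∞, p' = p/(p−1). Let Ω ⊆ ℝ^N be a domain with boundary Γ, let x ∈ Ω and R > 0 be such that B̄_R(x) ∩ (ℝ^N \ Ω) = {y_x} for some point y_x ∈ Γ. Let u be a bounded viscosity solution of problem (P) in Ω with 0 < u < 1 on Ω×(0,∞), and let v : Ω̄×(0,∞) → ℝ be defined by Erfc(√p'·v(z,t)/(2√t)) = u(z,t). Assume sup_{z∈B̄_R(x)} |v(z,t) − d_Γ(z)|/√t → 0 as t → 0⁺. Then the ∞-mean μ_∞(u(·,t)) = (1/2)·(min_{z∈B̄_R(x)} u(z,t) + max_{z∈B̄_R(x)} u(z,t)) satisfies lim_{t→0⁺} μ_∞(u(·,t)) = 1/2. -/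

import Mathlib

open MeasureTheory Metric Set Filter
open scoped Topology ENNReal NNReal Real Classical

noncomputable section

/-- The Hessian matrix of a real-valued function, via the second iterated Fréchet derivative. -/
noncomputable def hess {N : ℕ} (f : EuclideanSpace ℝ (Fin N) → ℝ) (x : EuclideanSpace ℝ (Fin N)) :
    Matrix (Fin N) (Fin N) ℝ :=
  fun i j => iteratedFDeriv ℝ 2 f x ![EuclideanSpace.single i 1, EuclideanSpace.single j 1]

/-- The quadratic form ⟨Xv, v⟩ associated to a matrix. -/
noncomputable def qform {N : ℕ} (X : Matrix (Fin N) (Fin N) ℝ) (v : EuclideanSpace ℝ (Fin N)) : ℝ :=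
  ∑ i, ∑ j, X i j * v j * v i

/-- Smallest eigenvalue (via the Rayleigh quotient) of a symmetric matrix. -/
noncomputable def lamMin {N : ℕ} (X : Matrix (Fin N) (Fin N) ℝ) : ℝ :=
  sInf {r | ∃ v : EuclideanSpace ℝ (Fin N), ‖v‖ = 1 ∧ r = qform X v}

/-- Largest eigenvalue (via the Rayleigh quotient) of a symmetric matrix. -/
noncomputable def lamMax {N : ℕ} (X : Matrix (Fin N) (Fin N) ℝ) : ℝ :=
  sSup {r | ∃ v : EuclideanSpace ℝ (Fin N), ‖v‖ = 1 ∧ r = qform X v}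

/-- F(ξ, X) = (1/p)[tr X + (p−2)⟨Xξ,ξ⟩/|ξ|²]. -/
noncomputable def Fop {N : ℕ} (p : ℝ) (ξ : EuclideanSpace ℝ (Fin N))
    (X : Matrix (Fin N) (Fin N) ℝ) : ℝ :=
  (1/p) * (Matrix.trace X + (p - 2) * qform X ξ / ‖ξ‖^2)

/-- Lower semicontinuous relaxation F_*. -/
noncomputable def Flower {N : ℕ} (p : ℝ) (ξ : EuclideanSpace ℝ (Fin N))
    (X : Matrix (Fin N) (Fin N) ℝ) : ℝ :=
  if ξ = 0 then
    (1/p) * (Matrix.trace X + max (p - 2) 0 * lamMin X + min (p - 2) 0 * lamMax X)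
  else Fop p ξ X

/-- Upper semicontinuous relaxation F^*. -/
noncomputable def Fupper {N : ℕ} (p : ℝ) (ξ : EuclideanSpace ℝ (Fin N))
    (X : Matrix (Fin N) (Fin N) ℝ) : ℝ :=
  if ξ = 0 then
    (1/p) * (Matrix.trace X + min (p - 2) 0 * lamMin X + max (p - 2) 0 * lamMax X)
  else Fop p ξ X

/-- Viscosity solution of `u_t = Δ_p^G u` in `Ω × (0,∞)`. -/
def IsViscositySol {N : ℕ} (p : ℝ) (Ω : Set (EuclideanSpace ℝ (Fin N)))
    (u : EuclideanSpace ℝ (Fin N) → ℝ → ℝ) : Prop :=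
  ContinuousOn (fun q : EuclideanSpace ℝ (Fin N) × ℝ => u q.1 q.2) (Ω ×ˢ Set.Ioi 0) ∧
  (∀ φ : EuclideanSpace ℝ (Fin N) × ℝ → ℝ, ContDiff ℝ 2 φ →
    ∀ x ∈ Ω, ∀ t ∈ Set.Ioi (0:ℝ),
      IsLocalMaxOn (fun q : EuclideanSpace ℝ (Fin N) × ℝ => u q.1 q.2 - φ q)
        (Ω ×ˢ Set.Ioi 0) (x, t) →
      deriv (fun s => φ (x, s)) t ≤
        Fupper p (gradient (fun y => φ (y, t)) x) (hess (fun y => φ (y, t)) x)) ∧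
  (∀ φ : EuclideanSpace ℝ (Fin N) × ℝ → ℝ, ContDiff ℝ 2 φ →
    ∀ x ∈ Ω, ∀ t ∈ Set.Ioi (0:ℝ),
      IsLocalMinOn (fun q : EuclideanSpace ℝ (Fin N) × ℝ => u q.1 q.2 - φ q)
        (Ω ×ˢ Set.Ioi 0) (x, t) →
      Flower p (gradient (fun y => φ (y, t)) x) (hess (fun y => φ (y, t)) x) ≤
        deriv (fun s => φ (x, s)) t)

/-- Bounded (viscosity) solution of problem (P): `u_t = Δ_p^G u` in `Ω × (0,∞)`,
`u = 0` on `Ω × {0}`, `u = 1` on `Γ × (0,∞)`; continuous away from `Γ × {0}`. -/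
def IsSolP {N : ℕ} (p : ℝ) (Ω : Set (EuclideanSpace ℝ (Fin N)))
    (u : EuclideanSpace ℝ (Fin N) → ℝ → ℝ) : Prop :=
  (∃ M : ℝ, ∀ x ∈ closure Ω, ∀ t : ℝ, 0 ≤ t → |u x t| ≤ M) ∧
  (∀ x ∈ closure Ω, ∀ t : ℝ, 0 ≤ t → ¬(x ∈ frontier Ω ∧ t = 0) →
    ContinuousWithinAt (fun q : EuclideanSpace ℝ (Fin N) × ℝ => u q.1 q.2)
      (closure Ω ×ˢ Set.Ici 0) (x, t)) ∧
  IsViscositySol p Ω u ∧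
  (∀ x ∈ Ω, u x 0 = 0) ∧
  (∀ y ∈ frontier Ω, ∀ t : ℝ, 0 < t → u y t = 1)

/-- Viscosity solution of the elliptic equation `u − ε² Δ_p^G u = 0` in `Ω`. -/
def IsEllipticViscositySol {N : ℕ} (p ε : ℝ) (Ω : Set (EuclideanSpace ℝ (Fin N)))
    (u : EuclideanSpace ℝ (Fin N) → ℝ) : Prop :=
  ContinuousOn u Ω ∧
  (∀ φ : EuclideanSpace ℝ (Fin N) → ℝ, ContDiff ℝ 2 φ → ∀ x ∈ Ω,
      IsLocalMaxOn (fun y => u y - φ y) Ω x →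
      φ x - ε^2 * Fupper p (gradient φ x) (hess φ x) ≤ 0) ∧
  (∀ φ : EuclideanSpace ℝ (Fin N) → ℝ, ContDiff ℝ 2 φ → ∀ x ∈ Ω,
      IsLocalMinOn (fun y => u y - φ y) Ω x →
      0 ≤ φ x - ε^2 * Flower p (gradient φ x) (hess φ x))

/-- The complementary error function. -/
noncomputable def Erfc (σ : ℝ) : ℝ := (2 / Real.sqrt π) * ∫ τ in Set.Ioi σ, Real.exp (-τ^2)

/-- The explicit radially symmetric solution `u^ε` of the elliptic problem in the ball `B_R`. -/
noncomputable def uEps (N : ℕ) (p R ε : ℝ) (x : EuclideanSpace ℝ (Fin N)) : ℝ :=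
  (∫ θ in (0:ℝ)..π,
      Real.exp (Real.sqrt (p/(p-1)) * (‖x‖/ε) * Real.cos θ) * (Real.sin θ) ^ (((N:ℝ) - p)/(p-1))) /
  (∫ θ in (0:ℝ)..π,
      Real.exp (Real.sqrt (p/(p-1)) * (R/ε) * Real.cos θ) * (Real.sin θ) ^ (((N:ℝ) - p)/(p-1)))

/-! The ball touches `Γ` only at `y_x`, where `u(·,t) = 1`, while `0 < u < 1` at its other
points; hence `max_{B̄_R(x)} u(·,t) = 1` and `0 ≤ min_{B̄_R(x)} u(·,t) ≤ u(x,t)`. At the centre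
`v(x,t) → d_Γ(x) > 0`, so the argument `√p' v(x,t) / (2√t)` of `Erfc` tends to `+∞` and
`u(x,t) → 0`. -/

theorem tendsto_erfc_atTop : Tendsto Erfc atTop (𝓝 0) := by
  have h := (tendsto_integral_Ioi_zero (f := fun τ : ℝ => Real.exp (-τ ^ 2)) (μ := volume)
    tendsto_id).const_mul (2 / Real.sqrt π)
  rw [mul_zero] at h
  exact h

theorem tendsto_inv_sqrt_nhdsGT_zero : Tendsto (fun t : ℝ => (Real.sqrt t)⁻¹) (𝓝[>] 0) atTop := by
  refine tendsto_inv_nhdsGT_zero.comp (tendsto_nhdsWithin_of_tendsto_nhds_of_eventually_within _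
    ?_ (eventually_mem_nhdsWithin.mono fun t ht => Real.sqrt_pos.2 ht))
  simpa using Real.continuous_sqrt.continuousWithinAt.tendsto (s := Ioi 0) (x := 0)

theorem tendsto_erfc_mul_div_sqrt {w : ℝ → ℝ} {q d : ℝ} (hq : 0 < q) (hd : 0 < d)
    (hw : Tendsto w (𝓝[>] 0) (𝓝 d)) :
    Tendsto (fun t => Erfc (q * w t / (2 * Real.sqrt t))) (𝓝[>] 0) (𝓝 0) := by
  have hlim : Tendsto (fun t => q * w t / 2) (𝓝[>] 0) (𝓝 (q * d / 2)) :=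
    (hw.const_mul q).div_const 2
  refine tendsto_erfc_atTop.comp ?_
  convert (hlim.pos_mul_atTop (by positivity) tendsto_inv_sqrt_nhdsGT_zero) using 2 with t
  ring

theorem tendsto_nhdsGT_of_abs_sub_le_sqrt {w : ℝ → ℝ} {d : ℝ}
    (h : ∀ᶠ t in 𝓝[>] 0, |w t - d| ≤ Real.sqrt t) : Tendsto w (𝓝[>] 0) (𝓝 d) := by
  have hsqrt : Tendsto (fun t : ℝ => Real.sqrt t) (𝓝[>] 0) (𝓝 0) := by
    simpa using (Real.continuous_sqrt.tendsto 0).mono_left nhdsWithin_le_nhds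
  exact tendsto_iff_dist_tendsto_zero.2
    (squeeze_zero' (Eventually.of_forall fun _ => dist_nonneg) h hsqrt)

theorem tendsto_sInf_of_mem_of_lowerBounds {α : Type*} {l : Filter α} {S : α → Set ℝ}
    {g : α → ℝ} {a : ℝ} (hlow : ∀ᶠ t in l, a ∈ lowerBounds (S t)) (hmem : ∀ᶠ t in l, g t ∈ S t)
    (hg : Tendsto g l (𝓝 a)) : Tendsto (fun t => sInf (S t)) l (𝓝 a) := by
  refine tendsto_of_tendsto_of_tendsto_of_le_of_le' tendsto_const_nhds hg ?_ ?_
  · filter_upwards [hlow, hmem] with t ha hg using le_csInf ⟨_, hg⟩ ha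
  · filter_upwards [hlow, hmem] with t ha hg using csInf_le ⟨a, ha⟩ hg

section TouchingBall

variable {N : ℕ} {p : ℝ} {Ω : Set (EuclideanSpace ℝ (Fin N))} {x yx : EuclideanSpace ℝ (Fin N)}
  {R t : ℝ} {u : EuclideanSpace ℝ (Fin N) → ℝ → ℝ}

theorem IsSolP.eq_one_of_mem_frontier (hu : IsSolP p Ω u) (hyx : yx ∈ frontier Ω) (ht : 0 < t) :
    u yx t = 1 :=
  hu.2.2.2.2 yx hyx t ht

theorem mem_closedBall_of_inter_compl_eq (htouch : closedBall x R ∩ Ωᶜ = {yx}) :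
    yx ∈ closedBall x R :=
  (htouch.symm ▸ rfl : yx ∈ closedBall x R ∩ Ωᶜ).1

theorem mem_or_eq_of_inter_compl_eq (htouch : closedBall x R ∩ Ωᶜ = {yx}) {z}
    (hz : z ∈ closedBall x R) : z ∈ Ω ∨ z = yx := by
  by_cases hzΩ : z ∈ Ω
  · exact Or.inl hzΩ
  · exact Or.inr (htouch ▸ ⟨hz, hzΩ⟩ : z ∈ ({yx} : Set _))

theorem mem_Icc_of_mem_closedBall (hyx : yx ∈ frontier Ω)
    (htouch : closedBall x R ∩ Ωᶜ = {yx}) (hu : IsSolP p Ω u)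
    (hupos : ∀ z ∈ Ω, ∀ t : ℝ, 0 < t → 0 < u z t ∧ u z t < 1) (ht : 0 < t) {z}
    (hz : z ∈ closedBall x R) : u z t ∈ Icc 0 1 := by
  rcases mem_or_eq_of_inter_compl_eq htouch hz with hzΩ | rfl
  · exact ⟨(hupos z hzΩ t ht).1.le, (hupos z hzΩ t ht).2.le⟩
  · rw [hu.eq_one_of_mem_frontier hyx ht]
    exact right_mem_Icc.2 zero_le_one

theorem isGreatest_image_closedBall (hyx : yx ∈ frontier Ω)
    (htouch : closedBall x R ∩ Ωᶜ = {yx}) (hu : IsSolP p Ω u)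
    (hupos : ∀ z ∈ Ω, ∀ t : ℝ, 0 < t → 0 < u z t ∧ u z t < 1) (ht : 0 < t) :
    IsGreatest ((fun z => u z t) '' closedBall x R) 1 :=
  ⟨⟨yx, mem_closedBall_of_inter_compl_eq htouch, hu.eq_one_of_mem_frontier hyx ht⟩,
    forall_mem_image.2 fun _ hz => (mem_Icc_of_mem_closedBall hyx htouch hu hupos ht hz).2⟩

theorem zero_mem_lowerBounds_image_closedBall (hyx : yx ∈ frontier Ω)
    (htouch : closedBall x R ∩ Ωᶜ = {yx}) (hu : IsSolP p Ω u)
    (hupos : ∀ z ∈ Ω, ∀ t : ℝ, 0 < t → 0 < u z t ∧ u z t < 1) (ht : 0 < t) :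
    0 ∈ lowerBounds ((fun z => u z t) '' closedBall x R) :=
  forall_mem_image.2 fun _ hz => (mem_Icc_of_mem_closedBall hyx htouch hu hupos ht hz).1

end TouchingBall

theorem stmt17_general (N : ℕ) (p : ℝ) (hp : 1 < p)
    (Ω : Set (EuclideanSpace ℝ (Fin N))) (hΩo : IsOpen Ω)
    (x : EuclideanSpace ℝ (Fin N)) (hx : x ∈ Ω) (R : ℝ)
    (yx : EuclideanSpace ℝ (Fin N)) (hyx : yx ∈ frontier Ω)
    (htouch : Metric.closedBall x R ∩ Ωᶜ = {yx})
    (u : EuclideanSpace ℝ (Fin N) → ℝ → ℝ) (hu : IsSolP p Ω u)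
    (hupos : ∀ z ∈ Ω, ∀ t : ℝ, 0 < t → 0 < u z t ∧ u z t < 1)
    (v : EuclideanSpace ℝ (Fin N) → ℝ → ℝ)
    (hv : ∀ z ∈ closure Ω, ∀ t : ℝ, 0 < t →
      Erfc (Real.sqrt (p/(p-1)) * v z t / (2 * Real.sqrt t)) = u z t)
    (hvd : ∀ ε : ℝ, 0 < ε → ∃ t₀ : ℝ, 0 < t₀ ∧ ∀ t : ℝ, 0 < t → t < t₀ →
      ∀ z ∈ Metric.closedBall x R,
        |v z t - Metric.infDist z (frontier Ω)| ≤ ε * Real.sqrt t) :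
    Filter.Tendsto (fun t : ℝ =>
        (1/2) * (sInf ((fun z => u z t) '' Metric.closedBall x R) +
          sSup ((fun z => u z t) '' Metric.closedBall x R)))
      (𝓝[>] (0:ℝ)) (𝓝 (1/2)) := by
  have hxball : x ∈ closedBall x R :=
    mem_closedBall_self (dist_nonneg.trans (mem_closedBall_of_inter_compl_eq htouch))
  have hd : 0 < infDist x (frontier Ω) :=
    (isClosed_frontier.notMem_iff_infDist_pos ⟨yx, hyx⟩).1 (hΩo.frontier_eq ▸ fun h => h.2 hx)
  have hvx : Tendsto (fun t => v x t) (𝓝[>] 0) (𝓝 (infDist x (frontier Ω))) := by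
    obtain ⟨t₀, ht₀, hclose⟩ := hvd 1 one_pos
    refine tendsto_nhdsGT_of_abs_sub_le_sqrt ?_
    filter_upwards [Ioo_mem_nhdsGT ht₀] with t ht
    simpa using hclose t ht.1 ht.2 x hxball
  have hux : Tendsto (fun t => u x t) (𝓝[>] 0) (𝓝 0) := by
    refine (tendsto_erfc_mul_div_sqrt (q := Real.sqrt (p / (p - 1)))
      (Real.sqrt_pos.2 (div_pos (by linarith) (by linarith))) hd hvx).congr' ?_
    filter_upwards [self_mem_nhdsWithin] with t ht using hv x (subset_closure hx) t ht
  have hinf := tendsto_sInf_of_mem_of_lowerBounds (l := 𝓝[>] 0)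
    (eventually_mem_nhdsWithin.mono fun t ht =>
      zero_mem_lowerBounds_image_closedBall hyx htouch hu hupos ht)
    (Eventually.of_forall fun t => mem_image_of_mem (fun z => u z t) hxball) hux
  have hsup : ∀ᶠ t in 𝓝[>] (0 : ℝ), sSup ((fun z => u z t) '' closedBall x R) = 1 :=
    eventually_mem_nhdsWithin.mono fun t ht =>
      (isGreatest_image_closedBall hyx htouch hu hupos ht).csSup_eq
  have hmean := (hinf.add (tendsto_const_nhds (x := (1 : ℝ)))).const_mul (1 / 2 : ℝ)
  rw [zero_add, mul_one] at hmean
  exact hmean.congr' (hsup.mono fun t ht => by simp only [ht])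

/-- the `∞`-mean of `u(·,t)` on a ball touching the boundary tends to `1/2`
as `t → 0⁺`. -/
theorem stmt17 (N : ℕ) (hN : 2 ≤ N) (p : ℝ) (hp : 1 < p)
    (Ω : Set (EuclideanSpace ℝ (Fin N))) (hΩo : IsOpen Ω) (hΩc : IsConnected Ω)
    (x : EuclideanSpace ℝ (Fin N)) (hx : x ∈ Ω) (R : ℝ) (hR : 0 < R)
    (yx : EuclideanSpace ℝ (Fin N)) (hyx : yx ∈ frontier Ω)
    (htouch : Metric.closedBall x R ∩ Ωᶜ = {yx})
    (u : EuclideanSpace ℝ (Fin N) → ℝ → ℝ) (hu : IsSolP p Ω u)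
    (hupos : ∀ z ∈ Ω, ∀ t : ℝ, 0 < t → 0 < u z t ∧ u z t < 1)
    (v : EuclideanSpace ℝ (Fin N) → ℝ → ℝ)
    (hv : ∀ z ∈ closure Ω, ∀ t : ℝ, 0 < t →
      Erfc (Real.sqrt (p/(p-1)) * v z t / (2 * Real.sqrt t)) = u z t)
    (hvd : ∀ ε : ℝ, 0 < ε → ∃ t₀ : ℝ, 0 < t₀ ∧ ∀ t : ℝ, 0 < t → t < t₀ →
      ∀ z ∈ Metric.closedBall x R,
        |v z t - Metric.infDist z (frontier Ω)| ≤ ε * Real.sqrt t) :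
    Filter.Tendsto (fun t : ℝ =>
        (1/2) * (sInf ((fun z => u z t) '' Metric.closedBall x R) +
          sSup ((fun z => u z t) '' Metric.closedBall x R)))
      (𝓝[>] (0:ℝ)) (𝓝 (1/2)) :=
  stmt17_general N p hp Ω hΩo x hx R yx hyx htouch u hu hupos v hv hvd

end
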